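/- Let θ : [0,∞) → (0,∞) be nondecreasing, θ̃(r) = (1/log²2) ∫_r^{2r} (1/t) ∫_t^{2t} θ(s)/s ds dt, and α(r) = 3 d/dr (r θ̃(r)). Then 3θ(r) ≤ α(r) ≤ 13 θ(4r) for all r > 0. -/

import Mathlib

open MeasureTheory Set intervalIntegral Filter

/-- The smoothed Dini modulus `θ̃(r) = (1/log²2) ∫_r^{2r} (1/t) ∫_t^{2t} θ(s)/s ds dt`. -/
noncomputable def thetaTilde (θ : ℝ → ℝ) (r : ℝ) : ℝ :=
  (1 / Real.log 2 ^ 2) * ∫ t in r..(2 * r), (1 / t) * ∫ s in t..(2 * t), θ s / s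

/-- The derived modulus `α(r) = 3 (d/dr)(r θ̃(r))`. -/
noncomputable def alphaMod (θ : ℝ → ℝ) (r : ℝ) : ℝ :=
  3 * deriv (fun ρ => ρ * thetaTilde θ ρ) r

namespace Statement5Aux

variable {θ : ℝ → ℝ}

lemma intInt (hmono : MonotoneOn θ (Set.Ici 0)) {a b : ℝ} (ha : 0 < a) (hb : 0 < b) :
    IntervalIntegrable (fun s => θ s / s) MeasureTheory.volume a b := by
  have hsub : Set.uIcc a b ⊆ Set.Ioi 0 := by
    intro x hx
    exact lt_of_lt_of_le (lt_min ha hb) hx.1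
  have h1 : IntervalIntegrable θ MeasureTheory.volume a b :=
    (hmono.mono (hsub.trans Set.Ioi_subset_Ici_self)).intervalIntegrable
  have h2 : ContinuousOn (fun s : ℝ => s⁻¹) (Set.uIcc a b) :=
    ContinuousOn.inv₀ continuousOn_id fun x hx => (hsub hx).ne'
  simpa [div_eq_mul_inv] using h1.mul_continuousOn h2

lemma int_const_inv {c t : ℝ} (ht : 0 < t) :
    ∫ s in t..(2 * t), c * s⁻¹ = c * Real.log 2 := by
  have h0 : (0 : ℝ) ∉ Set.uIcc t (2 * t) :=
    Set.notMem_uIcc_of_lt ht (by linarith)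
  rw [intervalIntegral.integral_const_mul, integral_inv h0,
    show (2 * t) / t = 2 by field_simp]

lemma g_lb (hmono : MonotoneOn θ (Set.Ici 0)) {t : ℝ} (ht : 0 < t) :
    Real.log 2 * θ t ≤ ∫ s in t..(2 * t), θ s / s := by
  have h0 : (0 : ℝ) ∉ Set.uIcc t (2 * t) :=
    Set.notMem_uIcc_of_lt ht (by linarith)
  have h1 : IntervalIntegrable (fun s => θ t * s⁻¹) MeasureTheory.volume t (2 * t) :=
    (continuousOn_const.mul (ContinuousOn.inv₀ continuousOn_id
      fun x hx => by rintro rfl; exact h0 hx)).intervalIntegrable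
  have h2 := intInt hmono ht (by linarith : (0:ℝ) < 2 * t)
  have h3 : ∫ s in t..(2 * t), θ t * s⁻¹ ≤ ∫ s in t..(2 * t), θ s / s := by
    apply intervalIntegral.integral_mono_on (by linarith) h1 h2
    intro s hs
    have hs0 : 0 < s := lt_of_lt_of_le ht hs.1
    rw [div_eq_mul_inv]
    exact mul_le_mul_of_nonneg_right
      (hmono (Set.mem_Ici.mpr ht.le) (Set.mem_Ici.mpr hs0.le) hs.1) (inv_nonneg.mpr hs0.le)
  calc Real.log 2 * θ t = θ t * Real.log 2 := mul_comm _ _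
    _ = ∫ s in t..(2 * t), θ t * s⁻¹ := (int_const_inv ht).symm
    _ ≤ _ := h3

lemma g_ub (hmono : MonotoneOn θ (Set.Ici 0)) {t : ℝ} (ht : 0 < t) :
    (∫ s in t..(2 * t), θ s / s) ≤ Real.log 2 * θ (2 * t) := by
  have h0 : (0 : ℝ) ∉ Set.uIcc t (2 * t) :=
    Set.notMem_uIcc_of_lt ht (by linarith)
  have h1 : IntervalIntegrable (fun s => θ (2 * t) * s⁻¹) MeasureTheory.volume t (2 * t) :=
    (continuousOn_const.mul (ContinuousOn.inv₀ continuousOn_id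
      fun x hx => by rintro rfl; exact h0 hx)).intervalIntegrable
  have h2 := intInt hmono ht (by linarith : (0:ℝ) < 2 * t)
  have h3 : (∫ s in t..(2 * t), θ s / s) ≤ ∫ s in t..(2 * t), θ (2 * t) * s⁻¹ := by
    apply intervalIntegral.integral_mono_on (by linarith) h2 h1
    intro s hs
    have hs0 : 0 < s := lt_of_lt_of_le ht hs.1
    rw [div_eq_mul_inv]
    exact mul_le_mul_of_nonneg_right
      (hmono (Set.mem_Ici.mpr hs0.le) (Set.mem_Ici.mpr (by linarith)) hs.2) (inv_nonneg.mpr hs0.le)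
  calc (∫ s in t..(2 * t), θ s / s) ≤ ∫ s in t..(2 * t), θ (2 * t) * s⁻¹ := h3
    _ = θ (2 * t) * Real.log 2 := int_const_inv ht
    _ = _ := mul_comm _ _

lemma g_contAt (hmono : MonotoneOn θ (Set.Ici 0)) {t₀ : ℝ} (ht₀ : 0 < t₀) :
    ContinuousAt (fun t => ∫ s in t..(2 * t), θ s / s) t₀ := by
  set c : ℝ := t₀ / 2 with hc
  have hc0 : 0 < c := by positivity
  set P : ℝ → ℝ := fun x => ∫ s in c..x, θ s / s with hP
  have hcu : c ∈ Set.uIcc c (8 * t₀) := Set.left_mem_uIcc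
  have hPcont : ContinuousOn P (Set.uIcc c (8 * t₀)) :=
    intervalIntegral.continuousOn_primitive_interval'
      (intInt hmono hc0 (by linarith)) hcu
  have huIcc : Set.uIcc c (8 * t₀) = Set.Icc c (8 * t₀) :=
    Set.uIcc_of_le (by linarith)
  have hPAt : ∀ x : ℝ, c < x → x < 8 * t₀ → ContinuousAt P x := by
    intro x h1 h2
    refine hPcont.continuousAt ?_
    rw [huIcc]
    exact Icc_mem_nhds h1 h2
  have hcomp : ContinuousAt (fun t => P (2 * t) - P t) t₀ := by
    have h2t : ContinuousAt (fun t : ℝ => 2 * t) t₀ :=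
      (continuous_const.mul continuous_id).continuousAt
    exact ((hPAt (2 * t₀) (by linarith) (by linarith)).comp h2t).sub
      (hPAt t₀ (by linarith) (by linarith))
  refine hcomp.congr ?_
  filter_upwards [Ioi_mem_nhds ht₀] with t ht
  have ht' : (0:ℝ) < t := ht
  have e : P (2 * t) - P t = ∫ s in t..(2 * t), θ s / s :=
    intervalIntegral.integral_interval_sub_left
      (intInt hmono hc0 (show (0:ℝ) < 2 * t by linarith)) (intInt hmono hc0 ht')
  exact e

end Statement5Aux

open Statement5Aux

/-- For a nondecreasing positive `θ : [0,∞) → (0,∞)` the function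
`α(r) = 3 (d/dr)(r θ̃(r))` satisfies `3θ(r) ≤ α(r) ≤ 13 θ(4r)` for all `r > 0`. -/
theorem statement5 (θ : ℝ → ℝ) (hmono : MonotoneOn θ (Set.Ici 0))
    (hpos : ∀ r, 0 ≤ r → 0 < θ r) :
    ∀ r : ℝ, 0 < r → 3 * θ r ≤ alphaMod θ r ∧ alphaMod θ r ≤ 13 * θ (4 * r) := by
  intro r hr
  set L : ℝ := Real.log 2 with hLdef
  have hL : 0 < L := Real.log_pos one_lt_two
  set g : ℝ → ℝ := fun t => ∫ s in t..(2 * t), θ s / s with hg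
  set F : ℝ → ℝ := fun t => (1 / t) * g t with hF
  -- continuity of F on (0,∞)
  have hFcontAt : ∀ x : ℝ, 0 < x → ContinuousAt F x := by
    intro x hx
    exact (continuousAt_const.div continuousAt_id hx.ne').mul (g_contAt hmono hx)
  have hFcont : ContinuousOn F (Set.Ioi 0) := fun x hx => (hFcontAt x hx).continuousWithinAt
  have hFint : ∀ a b : ℝ, 0 < a → 0 < b → IntervalIntegrable F MeasureTheory.volume a b := by
    intro a b ha hb
    refine (hFcont.mono ?_).intervalIntegrable
    intro x hx
    exact lt_of_lt_of_le (lt_min ha hb) hx.1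
  -- the primitive of F
  set H : ℝ → ℝ := fun x => ∫ t in (r / 2)..x, F t with hH
  have hr2 : (0:ℝ) < r / 2 := by positivity
  have hHderiv : ∀ x : ℝ, 0 < x → HasDerivAt H (F x) x := by
    intro x hx
    exact intervalIntegral.integral_hasDerivAt_right (hFint _ _ hr2 hx)
      (ContinuousOn.stronglyMeasurableAtFilter isOpen_Ioi hFcont x hx) (hFcontAt x hx)
  -- thetaTilde as a function of H
  have hTT : ∀ x : ℝ, 0 < x → thetaTilde θ x = (1 / L ^ 2) * (H (2 * x) - H x) := by
    intro x hx
    have := intervalIntegral.integral_interval_sub_left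
      (hFint (r/2) (2 * x) hr2 (by linarith)) (hFint (r/2) x hr2 hx)
    rw [thetaTilde, ← hLdef]
    rw [show (H (2 * x) - H x) = ∫ t in x..(2 * x), F t from this]
  set D : ℝ := (1 / L ^ 2) * (2 * F (2 * r) - F r) with hD
  have hTderiv : HasDerivAt (thetaTilde θ) D r := by
    have hd2 : HasDerivAt (fun x => H (2 * x)) (2 * F (2 * r)) r := by
      have h2x : HasDerivAt (fun x : ℝ => 2 * x) 2 r := by
        simpa using (hasDerivAt_id r).const_mul 2
      have h' := (hHderiv (2 * r) (by linarith)).comp r h2x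
      rw [show (2:ℝ) * F (2 * r) = F (2 * r) * 2 from mul_comm _ _]
      exact h'
    have h0 : HasDerivAt (fun x => (1 / L ^ 2) * (H (2 * x) - H x)) D r := by
      rw [hD]
      exact (hd2.sub (hHderiv r hr)).const_mul _
    refine h0.congr_of_eventuallyEq ?_
    filter_upwards [Ioi_mem_nhds hr] with x hx
    exact hTT x hx
  have hMul : HasDerivAt (fun x => x * thetaTilde θ x) (thetaTilde θ r + r * D) r := by
    have := (hasDerivAt_id r).mul hTderiv
    simp only [id, one_mul] at this
    exact this
  have hAlpha : alphaMod θ r = 3 * (thetaTilde θ r + r * D) := by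
    rw [alphaMod, hMul.deriv]
  -- bounds on thetaTilde
  have hTTr : thetaTilde θ r = (1 / L ^ 2) * ∫ t in r..(2 * r), F t := by
    rw [thetaTilde, ← hLdef]
  have hIoo : ∀ t : ℝ, t ∈ Set.Icc r (2 * r) → 0 < t := fun t ht => lt_of_lt_of_le hr ht.1
  have hinv_int : ∀ c : ℝ, IntervalIntegrable (fun t : ℝ => c * t⁻¹) MeasureTheory.volume r (2 * r) := by
    intro c
    refine (continuousOn_const.mul (ContinuousOn.inv₀ continuousOn_id ?_)).intervalIntegrable
    intro x hx
    rw [Set.uIcc_of_le (by linarith)] at hx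
    exact (hIoo x hx).ne'
  have hFlb : ∀ t ∈ Set.Icc r (2 * r), θ r * t⁻¹ * L ≤ F t := by
    intro t ht
    have ht0 : 0 < t := hIoo t ht
    have h1 : L * θ r ≤ g t :=
      le_trans (by
        have := hmono (Set.mem_Ici.mpr hr.le) (Set.mem_Ici.mpr ht0.le) ht.1
        nlinarith) (g_lb hmono ht0)
    have h2 : (1 / t) * (L * θ r) ≤ (1 / t) * g t :=
      mul_le_mul_of_nonneg_left h1 (by positivity)
    calc θ r * t⁻¹ * L = (1 / t) * (L * θ r) := by field_simp
      _ ≤ F t := h2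
  have hFub : ∀ t ∈ Set.Icc r (2 * r), F t ≤ θ (4 * r) * t⁻¹ * L := by
    intro t ht
    have ht0 : 0 < t := hIoo t ht
    have h1 : g t ≤ L * θ (4 * r) := by
      refine le_trans (g_ub hmono ht0) ?_
      have := hmono (Set.mem_Ici.mpr (by linarith : (0:ℝ) ≤ 2 * t))
        (Set.mem_Ici.mpr (by linarith : (0:ℝ) ≤ 4 * r)) (by linarith [ht.2])
      nlinarith
    have h2 : (1 / t) * g t ≤ (1 / t) * (L * θ (4 * r)) :=
      mul_le_mul_of_nonneg_left h1 (by positivity)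
    calc F t ≤ (1 / t) * (L * θ (4 * r)) := h2
      _ = θ (4 * r) * t⁻¹ * L := by field_simp
  have hIlb : θ r * L * L ≤ ∫ t in r..(2 * r), F t := by
    have h1 : ∫ t in r..(2 * r), (θ r * L) * t⁻¹ ≤ ∫ t in r..(2 * r), F t := by
      apply intervalIntegral.integral_mono_on (by linarith) (hinv_int _) (hFint _ _ hr (by linarith))
      intro t ht
      have := hFlb t ht
      nlinarith [this]
    calc θ r * L * L = (θ r * L) * L := by ring
      _ = ∫ t in r..(2 * r), (θ r * L) * t⁻¹ := (int_const_inv hr).symm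
      _ ≤ _ := h1
  have hIub : (∫ t in r..(2 * r), F t) ≤ θ (4 * r) * L * L := by
    have h1 : (∫ t in r..(2 * r), F t) ≤ ∫ t in r..(2 * r), (θ (4 * r) * L) * t⁻¹ := by
      apply intervalIntegral.integral_mono_on (by linarith) (hFint _ _ hr (by linarith)) (hinv_int _)
      intro t ht
      have := hFub t ht
      nlinarith [this]
    calc (∫ t in r..(2 * r), F t) ≤ ∫ t in r..(2 * r), (θ (4 * r) * L) * t⁻¹ := h1
      _ = (θ (4 * r) * L) * L := int_const_inv hr
      _ = θ (4 * r) * L * L := by ring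
  have hTTlb : θ r ≤ thetaTilde θ r := by
    rw [hTTr]
    have : (1 / L ^ 2) * (θ r * L * L) ≤ (1 / L ^ 2) * ∫ t in r..(2 * r), F t :=
      mul_le_mul_of_nonneg_left hIlb (by positivity)
    calc θ r = (1 / L ^ 2) * (θ r * L * L) := by field_simp
      _ ≤ _ := this
  have hTTub : thetaTilde θ r ≤ θ (4 * r) := by
    rw [hTTr]
    have : (1 / L ^ 2) * (∫ t in r..(2 * r), F t) ≤ (1 / L ^ 2) * (θ (4 * r) * L * L) :=
      mul_le_mul_of_nonneg_left hIub (by positivity)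
    calc (1 / L ^ 2) * (∫ t in r..(2 * r), F t) ≤ (1 / L ^ 2) * (θ (4 * r) * L * L) := this
      _ = θ (4 * r) := by field_simp
  -- bounds on r * D
  have hrD : r * D = (1 / L ^ 2) * (g (2 * r) - g r) := by
    rw [hD, hF]
    have h2r : (2 : ℝ) * r ≠ 0 := by positivity
    field_simp
  have hgrub : g r ≤ L * θ (2 * r) := g_ub hmono hr
  have hg2rlb : L * θ (2 * r) ≤ g (2 * r) := g_lb hmono (by linarith)
  have hg2rub : g (2 * r) ≤ L * θ (4 * r) := by
    rw [show (4:ℝ) * r = 2 * (2 * r) by ring]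
    exact g_ub hmono (show (0:ℝ) < 2 * r by linarith)
  have hgrlb : L * θ r ≤ g r := g_lb hmono hr
  have hrD0 : 0 ≤ r * D := by
    rw [hrD]
    have : 0 ≤ g (2 * r) - g r := by linarith
    positivity
  have hθr : 0 < θ r := hpos r hr.le
  have hθ4 : 0 < θ (4 * r) := hpos (4 * r) (by linarith)
  have hrDub : r * D ≤ θ (4 * r) / L := by
    rw [hrD]
    have h1 : g (2 * r) - g r ≤ L * θ (4 * r) := by nlinarith
    have h2 : (1 / L ^ 2) * (g (2 * r) - g r) ≤ (1 / L ^ 2) * (L * θ (4 * r)) :=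
      mul_le_mul_of_nonneg_left h1 (by positivity)
    calc (1 / L ^ 2) * (g (2 * r) - g r) ≤ (1 / L ^ 2) * (L * θ (4 * r)) := h2
      _ = θ (4 * r) / L := by field_simp
  have hLlb : (0.6931471803 : ℝ) < L := Real.log_two_gt_d9
  have hDivUb : θ (4 * r) / L ≤ (10 / 3) * θ (4 * r) := by
    rw [div_le_iff₀ hL]
    nlinarith
  constructor
  · rw [hAlpha]
    linarith
  · rw [hAlpha]
    linarith
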